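/- arXiv:1904.09942 — 6 statements merged into one kernel-verified Lean document; each statement's English description precedes it below -/
import Mathlib

section
/- If z is calibrated on S and z' refines z on S (i.e., z' is calibrated on S and E[z'(x) | z(x)=v] = v for all v in the range of z), then L_S(z';z) = I_S(z') - I_S(z), where L_S(z';z) = 4·E_{x∼S}[(z'(x)-z(x))²] and I_S(f) = 1 - 4·E_{x∼S}[f(x)(1-f(x))]. -/
open scoped Classical BigOperators
open Finset

/-- If `z` is calibrated on `S` (w.r.t. the Bayes optimal `p*`) and
`z'` refines `z` on `S` (i.e. `z'` is calibrated and `E[z'(x) | z(x)=v] = v` for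
all `v`), then `L_S(z';z) = I_S(z') - I_S(z)`. -/
theorem refinement_loss_eq_information_content_diff
    {S : Type*} [Fintype S] [Nonempty S]
    (w : S → ℝ) (hw : ∀ x, 0 ≤ w x) (hwsum : ∑ x, w x = 1)
    (p z z' : S → ℝ)
    (hp : ∀ x, p x ∈ Set.Icc (0 : ℝ) 1)
    (hz : ∀ x, z x ∈ Set.Icc (0 : ℝ) 1) (hz' : ∀ x, z' x ∈ Set.Icc (0 : ℝ) 1)
    (hcalz : ∀ v : ℝ,
      ∑ x ∈ Finset.univ.filter (fun x => z x = v), w x * p x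
        = v * ∑ x ∈ Finset.univ.filter (fun x => z x = v), w x)
    (hcalz' : ∀ u : ℝ,
      ∑ x ∈ Finset.univ.filter (fun x => z' x = u), w x * p x
        = u * ∑ x ∈ Finset.univ.filter (fun x => z' x = u), w x)
    (href : ∀ v : ℝ,
      ∑ x ∈ Finset.univ.filter (fun x => z x = v), w x * z' x
        = v * ∑ x ∈ Finset.univ.filter (fun x => z x = v), w x) :
    4 * ∑ x, w x * (z' x - z x) ^ 2
      = (1 - 4 * ∑ x, w x * (z' x * (1 - z' x)))
        - (1 - 4 * ∑ x, w x * (z x * (1 - z x))) := by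
  have hfib : ∀ f : S → ℝ, ∑ x, f x
      = ∑ v ∈ Finset.univ.image z, ∑ x ∈ Finset.univ.filter (fun x => z x = v), f x := by
    intro f
    exact (Finset.sum_fiberwise_of_maps_to
      (fun x _ => Finset.mem_image_of_mem z (Finset.mem_univ x)) f).symm
  have hA : ∑ x, w x * z' x = ∑ x, w x * z x := by
    rw [hfib (fun x => w x * z' x), hfib (fun x => w x * z x)]
    refine Finset.sum_congr rfl fun v _ => ?_
    rw [href v]
    rw [Finset.mul_sum]
    refine Finset.sum_congr rfl fun x hx => ?_
    have : z x = v := (Finset.mem_filter.mp hx).2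
    rw [this]; ring
  have hB : ∑ x, w x * (z x * z' x) = ∑ x, w x * (z x * z x) := by
    rw [hfib (fun x => w x * (z x * z' x)), hfib (fun x => w x * (z x * z x))]
    refine Finset.sum_congr rfl fun v _ => ?_
    have h1 : ∑ x ∈ Finset.univ.filter (fun x => z x = v), w x * (z x * z' x)
        = v * ∑ x ∈ Finset.univ.filter (fun x => z x = v), w x * z' x := by
      rw [Finset.mul_sum]
      refine Finset.sum_congr rfl fun x hx => ?_
      have : z x = v := (Finset.mem_filter.mp hx).2
      rw [this]; ring
    have h2 : ∑ x ∈ Finset.univ.filter (fun x => z x = v), w x * (z x * z x)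
        = v * (v * ∑ x ∈ Finset.univ.filter (fun x => z x = v), w x) := by
      rw [Finset.mul_sum, Finset.mul_sum]
      refine Finset.sum_congr rfl fun x hx => ?_
      have : z x = v := (Finset.mem_filter.mp hx).2
      rw [this]; ring
    rw [h1, href v, h2]
  have e1 : ∑ x, w x * (z' x - z x) ^ 2
      = ∑ x, w x * z' x * z' x - 2 * ∑ x, w x * (z x * z' x) + ∑ x, w x * z x * z x := by
    rw [Finset.mul_sum, ← Finset.sum_sub_distrib, ← Finset.sum_add_distrib]
    refine Finset.sum_congr rfl fun x _ => ?_; ring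
  have e2 : ∑ x, w x * (z' x * (1 - z' x)) = ∑ x, w x * z' x - ∑ x, w x * z' x * z' x := by
    rw [← Finset.sum_sub_distrib]; refine Finset.sum_congr rfl fun x _ => ?_; ring
  have e3 : ∑ x, w x * (z x * (1 - z x)) = ∑ x, w x * z x - ∑ x, w x * z x * z x := by
    rw [← Finset.sum_sub_distrib]; refine Finset.sum_congr rfl fun x _ => ?_; ring
  have hB' : ∑ x, w x * (z x * z x) = ∑ x, w x * z x * z x := by
    refine Finset.sum_congr rfl fun x _ => ?_; ring
  rw [e1, e2, e3]
  rw [hB' ] at hB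
  linarith [hA, hB]
end

section
/- Among all calibrated predictors on a finite population S, the Bayes optimal predictor p* maximizes information content: for every z calibrated on S, I_S(z) ≤ I_S(p*), with strict inequality unless z = p* almost surely. -/
open scoped Classical BigOperators
open Finset

/-- Among calibrated predictors, the Bayes optimal predictor `p*`
maximizes information content: `I_S(z) ≤ I_S(p*)`, with strict inequality
unless `z = p*` almost surely. -/
theorem bayes_optimal_maximizes_information
    {S : Type*} [Fintype S] [Nonempty S]
    (w : S → ℝ) (hw : ∀ x, 0 ≤ w x) (hwsum : ∑ x, w x = 1)
    (p z : S → ℝ)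
    (hp : ∀ x, p x ∈ Set.Icc (0 : ℝ) 1) (hz : ∀ x, z x ∈ Set.Icc (0 : ℝ) 1)
    (hcal : ∀ v : ℝ,
      ∑ x ∈ Finset.univ.filter (fun x => z x = v), w x * p x
        = v * ∑ x ∈ Finset.univ.filter (fun x => z x = v), w x) :
    (1 - 4 * ∑ x, w x * (z x * (1 - z x))
        ≤ 1 - 4 * ∑ x, w x * (p x * (1 - p x)))
    ∧ ((∃ x, 0 < w x ∧ z x ≠ p x) →
        1 - 4 * ∑ x, w x * (z x * (1 - z x))
          < 1 - 4 * ∑ x, w x * (p x * (1 - p x))) := by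
  classical
  have hmaps : ∀ x ∈ (Finset.univ : Finset S), z x ∈ Finset.univ.image z :=
    fun x _ => Finset.mem_image_of_mem z (Finset.mem_univ x)
  -- Fact 1 : ∑ w p = ∑ w z
  have h1 : ∑ x, w x * p x = ∑ x, w x * z x := by
    rw [← Finset.sum_fiberwise_of_maps_to hmaps (fun x => w x * p x),
        ← Finset.sum_fiberwise_of_maps_to hmaps (fun x => w x * z x)]
    refine Finset.sum_congr rfl fun v _ => ?_
    rw [hcal v, Finset.mul_sum]
    refine Finset.sum_congr rfl fun x hx => ?_
    have hzv : z x = v := (Finset.mem_filter.mp hx).2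
    rw [hzv]; ring
  -- Fact 2 : ∑ w z p = ∑ w z z
  have h2 : ∑ x, w x * (z x * p x) = ∑ x, w x * (z x * z x) := by
    rw [← Finset.sum_fiberwise_of_maps_to hmaps (fun x => w x * (z x * p x)),
        ← Finset.sum_fiberwise_of_maps_to hmaps (fun x => w x * (z x * z x))]
    refine Finset.sum_congr rfl fun v _ => ?_
    have e1 : ∑ x ∈ Finset.univ.filter (fun x => z x = v), w x * (z x * p x)
        = v * ∑ x ∈ Finset.univ.filter (fun x => z x = v), w x * p x := by
      rw [Finset.mul_sum]
      refine Finset.sum_congr rfl fun x hx => ?_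
      have hzv : z x = v := (Finset.mem_filter.mp hx).2
      rw [hzv]; ring
    have e2 : ∑ x ∈ Finset.univ.filter (fun x => z x = v), w x * (z x * z x)
        = v * (v * ∑ x ∈ Finset.univ.filter (fun x => z x = v), w x) := by
      rw [Finset.mul_sum, Finset.mul_sum]
      refine Finset.sum_congr rfl fun x hx => ?_
      have hzv : z x = v := (Finset.mem_filter.mp hx).2
      rw [hzv]; ring
    rw [e1, e2, hcal v]
  -- Key identity
  have key : ∑ x, w x * (z x * (1 - z x)) - ∑ x, w x * (p x * (1 - p x))
      = ∑ x, w x * (z x - p x) ^ 2 := by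
    have e1 : ∑ x, w x * (z x * (1 - z x))
        = ∑ x, w x * z x - ∑ x, w x * (z x * z x) := by
      rw [← Finset.sum_sub_distrib]
      exact Finset.sum_congr rfl fun x _ => by ring
    have e2 : ∑ x, w x * (p x * (1 - p x))
        = ∑ x, w x * p x - ∑ x, w x * (p x * p x) := by
      rw [← Finset.sum_sub_distrib]
      exact Finset.sum_congr rfl fun x _ => by ring
    have e3 : ∑ x, w x * (z x - p x) ^ 2
        = ∑ x, w x * (z x * z x) - 2 * ∑ x, w x * (z x * p x)
          + ∑ x, w x * (p x * p x) := by
      rw [Finset.mul_sum, ← Finset.sum_sub_distrib, ← Finset.sum_add_distrib]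
      exact Finset.sum_congr rfl fun x _ => by ring
    rw [e1, e2, e3]
    linarith [h1, h2]
  have hnn : (0:ℝ) ≤ ∑ x, w x * (z x - p x) ^ 2 :=
    Finset.sum_nonneg fun x _ => mul_nonneg (hw x) (sq_nonneg _)
  constructor
  · linarith
  · rintro ⟨x, hwx, hne⟩
    have hpos : (0:ℝ) < ∑ x, w x * (z x - p x) ^ 2 := by
      refine Finset.sum_pos' (fun y _ => mul_nonneg (hw y) (sq_nonneg _)) ⟨x, Finset.mem_univ x, ?_⟩
      exact mul_pos hwx (by have h := sub_ne_zero.mpr hne; positivity)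
    linarith
end

section
/- Let ρ be the merge of calibrated predictors z and q (ρ(x) = E[p* | z(x')=z(x), q(x')=q(x)]). Then I(ρ) ≥ I(z) + 4·D_R(q;z)², where D_R(q;z) = Σ_{u ∈ range(q)} Pr[q(x)=u]·|E[z(x)|q(x)=u] − u| is the refinement distance from q to z. -/
open scoped Classical BigOperators
open Finset

/-- For the merge `ρ` of calibrated predictors `z` and `q`,
`I(ρ) ≥ I(z) + 4·D_R(q;z)²`, where `D_R(q;z)` is the refinement distance from
`q` to `z` (stated in the mass-weighted form
`D_R(q;z) = ∑_{u ∈ range q} |∑_{q(x)=u} w x · z x − u · Pr[q=u]|`). -/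
theorem merge_information_gain
    {S : Type*} [Fintype S] [Nonempty S]
    (w : S → ℝ) (hw : ∀ x, 0 ≤ w x) (hwsum : ∑ x, w x = 1)
    (p z q ρ : S → ℝ)
    (hp : ∀ x, p x ∈ Set.Icc (0 : ℝ) 1)
    (hz : ∀ x, z x ∈ Set.Icc (0 : ℝ) 1) (hq : ∀ x, q x ∈ Set.Icc (0 : ℝ) 1)
    (hcalz : ∀ v : ℝ,
      ∑ x ∈ Finset.univ.filter (fun x => z x = v), w x * p x
        = v * ∑ x ∈ Finset.univ.filter (fun x => z x = v), w x)
    (hcalq : ∀ u : ℝ,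
      ∑ x ∈ Finset.univ.filter (fun x => q x = u), w x * p x
        = u * ∑ x ∈ Finset.univ.filter (fun x => q x = u), w x)
    -- ρ(x) is the conditional expectation of p* over the cell of x:
    (hρ : ∀ x : S,
      (∑ x' ∈ Finset.univ.filter (fun x' => z x' = z x ∧ q x' = q x), w x') * ρ x
        = ∑ x' ∈ Finset.univ.filter (fun x' => z x' = z x ∧ q x' = q x), w x' * p x') :
    1 - 4 * ∑ x, w x * (ρ x * (1 - ρ x))
      ≥ (1 - 4 * ∑ x, w x * (z x * (1 - z x)))
        + 4 * (∑ u ∈ Finset.univ.image q,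
            |(∑ x ∈ Finset.univ.filter (fun x => q x = u), w x * z x)
              - u * ∑ x ∈ Finset.univ.filter (fun x => q x = u), w x|) ^ 2 := by
  -- key per-fiber fact: ∑ w ρ = ∑ w p over each (z,q)-cell
  have key : ∀ v u : ℝ,
      ∑ x ∈ Finset.univ.filter (fun x => z x = v ∧ q x = u), w x * ρ x
        = ∑ x ∈ Finset.univ.filter (fun x => z x = v ∧ q x = u), w x * p x := by
    intro v u
    set T := Finset.univ.filter (fun x : S => z x = v ∧ q x = u) with hT
    rcases T.eq_empty_or_nonempty with h | ⟨x₀, hx₀⟩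
    · simp [h]
    · obtain ⟨-, hzv, hqu⟩ :
        x₀ ∈ Finset.univ ∧ z x₀ = v ∧ q x₀ = u := by
        simpa [hT, Finset.mem_filter, and_assoc] using hx₀
      have hρ0 := hρ x₀
      rw [hzv, hqu, ← hT] at hρ0
      by_cases hW : ∑ x ∈ T, w x = 0
      · have hall : ∀ x ∈ T, w x = 0 := fun x hx =>
          (Finset.sum_eq_zero_iff_of_nonneg (fun x _ => hw x)).mp hW x hx
        rw [Finset.sum_eq_zero fun x hx => by rw [hall x hx, zero_mul],
          Finset.sum_eq_zero fun x hx => by rw [hall x hx, zero_mul]]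
      · have hconst : ∀ x ∈ T, ρ x = ρ x₀ := by
          intro x hx
          obtain ⟨-, hzx, hqx⟩ :
            x ∈ Finset.univ ∧ z x = v ∧ q x = u := by
            simpa [hT, Finset.mem_filter, and_assoc] using hx
          have h2 := hρ x
          rw [hzx, hqx, ← hT] at h2
          exact mul_left_cancel₀ hW (h2.trans hρ0.symm)
        calc ∑ x ∈ T, w x * ρ x = ∑ x ∈ T, w x * ρ x₀ :=
              Finset.sum_congr rfl fun x hx => by rw [hconst x hx]
          _ = (∑ x ∈ T, w x) * ρ x₀ := by rw [Finset.sum_mul]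
          _ = ∑ x ∈ T, w x * p x := hρ0
  -- fibering over (z,q) pairs
  have fiberZQ : ∀ g : S → ℝ,
      ∑ x, g x = ∑ b ∈ Finset.univ.image (fun x => (z x, q x)),
        ∑ x ∈ Finset.univ.filter (fun x => (z x, q x) = b), g x := fun g =>
    (Finset.sum_fiberwise_of_maps_to (fun x _ => Finset.mem_image_of_mem _ (Finset.mem_univ x)) g).symm
  have hfil : ∀ v u : ℝ,
      Finset.univ.filter (fun x : S => (z x, q x) = (v, u))
        = Finset.univ.filter (fun x => z x = v ∧ q x = u) := by
    intro v u
    apply Finset.filter_congr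
    intro x _
    simp [Prod.ext_iff]
  -- S1: ∑ w ρ = ∑ w p
  have S1 : ∑ x, w x * ρ x = ∑ x, w x * p x := by
    rw [fiberZQ (fun x => w x * ρ x), fiberZQ (fun x => w x * p x)]
    refine Finset.sum_congr rfl fun b _ => ?_
    obtain ⟨v, u⟩ := b
    rw [hfil v u]
    exact key v u
  -- S2: ∑ w ρ z = ∑ w p z
  have S2 : ∑ x, w x * ρ x * z x = ∑ x, w x * p x * z x := by
    rw [fiberZQ (fun x => w x * ρ x * z x), fiberZQ (fun x => w x * p x * z x)]
    refine Finset.sum_congr rfl fun b _ => ?_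
    obtain ⟨v, u⟩ := b
    rw [hfil v u]
    have hzc : ∀ f : S → ℝ,
        ∑ x ∈ Finset.univ.filter (fun x => z x = v ∧ q x = u), f x * z x
          = (∑ x ∈ Finset.univ.filter (fun x => z x = v ∧ q x = u), f x) * v := by
      intro f
      rw [Finset.sum_mul]
      refine Finset.sum_congr rfl fun x hx => ?_
      rw [(Finset.mem_filter.mp hx).2.1]
    rw [hzc (fun x => w x * ρ x), hzc (fun x => w x * p x), key v u]
  -- S3: ∑ w ρ = ∑ w p over each q-cell
  have S3 : ∀ u : ℝ,
      ∑ x ∈ Finset.univ.filter (fun x => q x = u), w x * ρ x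
        = ∑ x ∈ Finset.univ.filter (fun x => q x = u), w x * p x := by
    intro u
    have fib : ∀ g : S → ℝ,
        ∑ x ∈ Finset.univ.filter (fun x => q x = u), g x
          = ∑ v ∈ (Finset.univ.filter (fun x => q x = u)).image z,
              ∑ x ∈ (Finset.univ.filter (fun x => q x = u)).filter (fun x => z x = v), g x :=
      fun g => (Finset.sum_fiberwise_of_maps_to
        (fun x hx => Finset.mem_image_of_mem _ hx) g).symm
    have hff : ∀ v : ℝ,
        (Finset.univ.filter (fun x : S => q x = u)).filter (fun x => z x = v)
          = Finset.univ.filter (fun x => z x = v ∧ q x = u) := by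
      intro v
      rw [Finset.filter_filter]
      apply Finset.filter_congr
      intro x _
      simp [and_comm]
    rw [fib (fun x => w x * ρ x), fib (fun x => w x * p x)]
    refine Finset.sum_congr rfl fun v _ => ?_
    rw [hff v]
    exact key v u
  -- fibering over z values
  have fiberZ : ∀ g : S → ℝ,
      ∑ x, g x = ∑ v ∈ Finset.univ.image z,
        ∑ x ∈ Finset.univ.filter (fun x => z x = v), g x := fun g =>
    (Finset.sum_fiberwise_of_maps_to (fun x _ => Finset.mem_image_of_mem _ (Finset.mem_univ x)) g).symm
  -- C1: ∑ w p = ∑ w z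
  have C1 : ∑ x, w x * p x = ∑ x, w x * z x := by
    rw [fiberZ (fun x => w x * p x), fiberZ (fun x => w x * z x)]
    refine Finset.sum_congr rfl fun v _ => ?_
    rw [hcalz v]
    rw [show ∑ x ∈ Finset.univ.filter (fun x => z x = v), w x * z x
        = ∑ x ∈ Finset.univ.filter (fun x => z x = v), w x * v from
      Finset.sum_congr rfl fun x hx => by rw [(Finset.mem_filter.mp hx).2]]
    rw [← Finset.sum_mul]
    ring
  -- C2: ∑ w p z = ∑ w z z
  have C2 : ∑ x, w x * p x * z x = ∑ x, w x * z x * z x := by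
    rw [fiberZ (fun x => w x * p x * z x), fiberZ (fun x => w x * z x * z x)]
    refine Finset.sum_congr rfl fun v _ => ?_
    have e1 : ∑ x ∈ Finset.univ.filter (fun x => z x = v), w x * p x * z x
        = (∑ x ∈ Finset.univ.filter (fun x => z x = v), w x * p x) * v := by
      rw [Finset.sum_mul]
      exact Finset.sum_congr rfl fun x hx => by rw [(Finset.mem_filter.mp hx).2]
    have e2 : ∑ x ∈ Finset.univ.filter (fun x => z x = v), w x * z x * z x
        = (∑ x ∈ Finset.univ.filter (fun x => z x = v), w x) * (v * v) := by
      rw [show (∑ x ∈ Finset.univ.filter (fun x => z x = v), w x) * (v * v)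
          = ∑ x ∈ Finset.univ.filter (fun x => z x = v), w x * (v * v) from
        (Finset.sum_mul _ _ _)]
      exact Finset.sum_congr rfl fun x hx => by rw [(Finset.mem_filter.mp hx).2]; ring
    rw [e1, e2, hcalz v]
    ring
  have e1 : ∑ x, w x * ρ x = ∑ x, w x * z x := S1.trans C1
  have e2 : ∑ x, w x * ρ x * z x = ∑ x, w x * z x * z x := S2.trans C2
  -- the information-gain identity
  have hident : ∑ x, w x * (ρ x * (1 - ρ x)) - ∑ x, w x * (z x * (1 - z x))
      + ∑ x, w x * (ρ x - z x) ^ 2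
      = (∑ x, w x * ρ x - ∑ x, w x * z x)
        - 2 * (∑ x, w x * ρ x * z x - ∑ x, w x * z x * z x) := by
    rw [← Finset.sum_sub_distrib, ← Finset.sum_add_distrib, ← Finset.sum_sub_distrib,
      ← Finset.sum_sub_distrib, Finset.mul_sum, ← Finset.sum_sub_distrib]
    exact Finset.sum_congr rfl fun x _ => by ring
  rw [e1, e2] at hident
  have hA : ∑ x, w x * (ρ x * (1 - ρ x))
      = ∑ x, w x * (z x * (1 - z x)) - ∑ x, w x * (ρ x - z x) ^ 2 := by linarith
  -- Step 2: refinement distance bounded by L1 distance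
  set D := ∑ u ∈ Finset.univ.image q,
      |(∑ x ∈ Finset.univ.filter (fun x => q x = u), w x * z x)
        - u * ∑ x ∈ Finset.univ.filter (fun x => q x = u), w x| with hDdef
  have hD0 : 0 ≤ D := Finset.sum_nonneg fun u _ => abs_nonneg _
  have step2 : D ≤ ∑ x, w x * |ρ x - z x| := by
    have bound : ∀ u ∈ Finset.univ.image q,
        |(∑ x ∈ Finset.univ.filter (fun x => q x = u), w x * z x)
          - u * ∑ x ∈ Finset.univ.filter (fun x => q x = u), w x|
          ≤ ∑ x ∈ Finset.univ.filter (fun x => q x = u), w x * |ρ x - z x| := by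
      intro u _
      rw [← hcalq u, ← S3 u, ← Finset.sum_sub_distrib]
      refine (Finset.abs_sum_le_sum_abs _ _).trans (le_of_eq ?_)
      refine Finset.sum_congr rfl fun x _ => ?_
      rw [← mul_sub, abs_mul, abs_of_nonneg (hw x), abs_sub_comm]
    calc D ≤ ∑ u ∈ Finset.univ.image q,
          ∑ x ∈ Finset.univ.filter (fun x => q x = u), w x * |ρ x - z x| :=
        Finset.sum_le_sum bound
      _ = ∑ x, w x * |ρ x - z x| :=
        Finset.sum_fiberwise_of_maps_to
          (fun x _ => Finset.mem_image_of_mem _ (Finset.mem_univ x)) _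
  -- Step 3: Cauchy–Schwarz
  have cs : (∑ x, w x * |ρ x - z x|) ^ 2 ≤ ∑ x, w x * (ρ x - z x) ^ 2 := by
    have h := Finset.sum_mul_sq_le_sq_mul_sq Finset.univ
      (fun x => Real.sqrt (w x)) (fun x => Real.sqrt (w x) * |ρ x - z x|)
    have eA : ∑ x, Real.sqrt (w x) * (Real.sqrt (w x) * |ρ x - z x|)
        = ∑ x, w x * |ρ x - z x| := by
      refine Finset.sum_congr rfl fun x _ => ?_
      rw [← mul_assoc, Real.mul_self_sqrt (hw x)]
    have eB : ∑ x, (Real.sqrt (w x)) ^ 2 = (1 : ℝ) := by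
      rw [← hwsum]
      exact Finset.sum_congr rfl fun x _ => Real.sq_sqrt (hw x)
    have eC : ∑ x, (Real.sqrt (w x) * |ρ x - z x|) ^ 2
        = ∑ x, w x * (ρ x - z x) ^ 2 := by
      refine Finset.sum_congr rfl fun x _ => ?_
      rw [mul_pow, Real.sq_sqrt (hw x), sq_abs]
    rw [eA, eB, eC, one_mul] at h
    exact h
  have hL1 : 0 ≤ ∑ x, w x * |ρ x - z x| :=
    Finset.sum_nonneg fun x _ => mul_nonneg (hw x) (abs_nonneg _)
  have hD2 : D ^ 2 ≤ ∑ x, w x * (ρ x - z x) ^ 2 :=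
    (pow_le_pow_left₀ hD0 step2 2).trans cs
  rw [hA]
  linarith
end

section
/- For calibrated predictors z, q on S, the expected squared difference is lower bounded by the squared refinement distance: 4·E_{x∼S}[(z(x)−q(x))²] ≥ 4·D_R(q;z)², where D_R(q;z) = Σ_{u} Pr[q(x)=u]·|E[z(x)|q(x)=u] − u|. -/
open scoped Classical BigOperators
open Finset

/-- For calibrated predictors `z`, `q` on `S`, the (scaled)
expected squared difference is lower bounded by the squared refinement
distance: `4·E[(z−q)²] ≥ 4·D_R(q;z)²`, with the refinement distance stated in
the mass-weighted form over the level sets of `q`. -/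
theorem squared_difference_ge_refinement_distance_sq
    {S : Type*} [Fintype S] [Nonempty S]
    (w : S → ℝ) (hw : ∀ x, 0 ≤ w x) (hwsum : ∑ x, w x = 1)
    (p z q : S → ℝ)
    (hp : ∀ x, p x ∈ Set.Icc (0 : ℝ) 1)
    (hz : ∀ x, z x ∈ Set.Icc (0 : ℝ) 1) (hq : ∀ x, q x ∈ Set.Icc (0 : ℝ) 1)
    (hcalz : ∀ v : ℝ,
      ∑ x ∈ Finset.univ.filter (fun x => z x = v), w x * p x
        = v * ∑ x ∈ Finset.univ.filter (fun x => z x = v), w x)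
    (hcalq : ∀ u : ℝ,
      ∑ x ∈ Finset.univ.filter (fun x => q x = u), w x * p x
        = u * ∑ x ∈ Finset.univ.filter (fun x => q x = u), w x) :
    4 * ∑ x, w x * (z x - q x) ^ 2
      ≥ 4 * (∑ u ∈ Finset.univ.image q,
          |(∑ x ∈ Finset.univ.filter (fun x => q x = u), w x * z x)
            - u * ∑ x ∈ Finset.univ.filter (fun x => q x = u), w x|) ^ 2 := by
  set D := ∑ u ∈ Finset.univ.image q,
      |(∑ x ∈ Finset.univ.filter (fun x => q x = u), w x * z x)
        - u * ∑ x ∈ Finset.univ.filter (fun x => q x = u), w x| with hD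
  set B := ∑ x, w x * |z x - q x| with hB
  have hD0 : 0 ≤ D := Finset.sum_nonneg fun u _ => abs_nonneg _
  have hDB : D ≤ B := by
    have hpart : B = ∑ u ∈ Finset.univ.image q,
        ∑ x ∈ Finset.univ.filter (fun x => q x = u), w x * |z x - q x| :=
      (Finset.sum_fiberwise_of_maps_to
        (fun x _ => Finset.mem_image_of_mem q (Finset.mem_univ x)) _).symm
    rw [hpart]
    refine Finset.sum_le_sum fun u _ => ?_
    have h1 : (∑ x ∈ Finset.univ.filter (fun x => q x = u), w x * z x)
        - u * ∑ x ∈ Finset.univ.filter (fun x => q x = u), w x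
        = ∑ x ∈ Finset.univ.filter (fun x => q x = u), w x * (z x - q x) := by
      rw [Finset.mul_sum, ← Finset.sum_sub_distrib]
      refine Finset.sum_congr rfl fun x hx => ?_
      have := (Finset.mem_filter.mp hx).2
      rw [this]; ring
    rw [h1]
    calc |∑ x ∈ Finset.univ.filter (fun x => q x = u), w x * (z x - q x)|
        ≤ ∑ x ∈ Finset.univ.filter (fun x => q x = u), |w x * (z x - q x)| :=
          Finset.abs_sum_le_sum_abs _ _
      _ = ∑ x ∈ Finset.univ.filter (fun x => q x = u), w x * |z x - q x| := by
          refine Finset.sum_congr rfl fun x _ => ?_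
          rw [abs_mul, abs_of_nonneg (hw x)]
  have hB2 : B ^ 2 ≤ ∑ x, w x * (z x - q x) ^ 2 := by
    have hcs := Finset.sum_mul_sq_le_sq_mul_sq Finset.univ
      (fun x => Real.sqrt (w x)) (fun x => Real.sqrt (w x) * |z x - q x|)
    have e1 : ∀ x : S, Real.sqrt (w x) * (Real.sqrt (w x) * |z x - q x|)
        = w x * |z x - q x| := by
      intro x; rw [← mul_assoc, Real.mul_self_sqrt (hw x)]
    have e2 : ∀ x : S, Real.sqrt (w x) ^ 2 = w x := fun x => Real.sq_sqrt (hw x)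
    have e3 : ∀ x : S, (Real.sqrt (w x) * |z x - q x|) ^ 2 = w x * (z x - q x) ^ 2 := by
      intro x; rw [mul_pow, Real.sq_sqrt (hw x), sq_abs]
    simp only [e1, e2, e3] at hcs
    calc B ^ 2 ≤ (∑ x, w x) * ∑ x, w x * (z x - q x) ^ 2 := hcs
      _ = ∑ x, w x * (z x - q x) ^ 2 := by rw [hwsum, one_mul]
  have : D ^ 2 ≤ ∑ x, w x * (z x - q x) ^ 2 :=
    le_trans (pow_le_pow_left₀ hD0 hDB 2) hB2
  linarith
end

section
/- For a calibrated predictor z on S, the entropic information loss equals the difference of entropic information contents: E_{x∼S}[D_KL(p*(x); z(x))] = I^ent_S(p*) − I^ent_S(z), where D_KL(p;q) = p·log(p/q) + (1−p)·log((1−p)/(1−q)) is the binary KL divergence. -/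
open scoped Classical BigOperators
open Finset

/-- Binary entropy (natural log). -/
noncomputable def binEntropy (p : ℝ) : ℝ :=
  -(p * Real.log p) - (1 - p) * Real.log (1 - p)

/-- Binary KL divergence (natural log). -/
noncomputable def klBin (p q : ℝ) : ℝ :=
  p * Real.log (p / q) + (1 - p) * Real.log ((1 - p) / (1 - q))

/-- For a calibrated predictor `z` on `S`, the entropic
information loss equals the difference of entropic information contents:
`E[D_KL(p*(x); z(x))] = I^ent_S(p*) − I^ent_S(z)`. -/
theorem entropic_loss_eq_entropic_information_diff
    {S : Type*} [Fintype S] [Nonempty S]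
    (w : S → ℝ) (hw : ∀ x, 0 ≤ w x) (hwsum : ∑ x, w x = 1)
    (p z : S → ℝ)
    (hp : ∀ x, p x ∈ Set.Ioo (0 : ℝ) 1) (hz : ∀ x, z x ∈ Set.Ioo (0 : ℝ) 1)
    (hcal : ∀ v : ℝ,
      ∑ x ∈ Finset.univ.filter (fun x => z x = v), w x * p x
        = v * ∑ x ∈ Finset.univ.filter (fun x => z x = v), w x) :
    ∑ x, w x * klBin (p x) (z x)
      = (1 - ∑ x, w x * binEntropy (p x)) - (1 - ∑ x, w x * binEntropy (z x)) := by
  -- cross term equality via fibering over values of z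
  have key : ∑ x, w x * (p x * Real.log (z x) + (1 - p x) * Real.log (1 - z x))
      = ∑ x, w x * (z x * Real.log (z x) + (1 - z x) * Real.log (1 - z x)) := by
    rw [← Finset.sum_fiberwise_of_maps_to (g := z) (t := Finset.univ.image z)
      (fun x _ => Finset.mem_image_of_mem z (Finset.mem_univ x)),
      ← Finset.sum_fiberwise_of_maps_to (g := z) (t := Finset.univ.image z)
      (fun x _ => Finset.mem_image_of_mem z (Finset.mem_univ x))]
    refine Finset.sum_congr rfl fun v _ => ?_
    have h1 : ∀ x ∈ Finset.univ.filter (fun x => z x = v),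
        w x * (p x * Real.log (z x) + (1 - p x) * Real.log (1 - z x))
        = (w x * p x) * Real.log v + (w x - w x * p x) * Real.log (1 - v) := by
      intro x hx
      simp only [Finset.mem_filter] at hx
      rw [hx.2]; ring
    have h2 : ∀ x ∈ Finset.univ.filter (fun x => z x = v),
        w x * (z x * Real.log (z x) + (1 - z x) * Real.log (1 - z x))
        = w x * (v * Real.log v + (1 - v) * Real.log (1 - v)) := by
      intro x hx
      simp only [Finset.mem_filter] at hx
      rw [hx.2]
    rw [Finset.sum_congr rfl h1, Finset.sum_congr rfl h2]
    rw [Finset.sum_add_distrib, ← Finset.sum_mul, ← Finset.sum_mul,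
      Finset.sum_sub_distrib, hcal v, ← Finset.sum_mul]
    ring
  have expand : ∀ x, w x * klBin (p x) (z x)
      = w x * binEntropy (z x) - w x * binEntropy (p x)
        + (w x * (z x * Real.log (z x) + (1 - z x) * Real.log (1 - z x))
           - w x * (p x * Real.log (z x) + (1 - p x) * Real.log (1 - z x))) := by
    intro x
    obtain ⟨hp0, hp1⟩ := hp x
    obtain ⟨hz0, hz1⟩ := hz x
    unfold klBin binEntropy
    rw [Real.log_div (ne_of_gt hp0) (ne_of_gt hz0),
      Real.log_div (by linarith) (by linarith : (1 : ℝ) - z x ≠ 0)]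
    ring
  calc ∑ x, w x * klBin (p x) (z x)
      = ∑ x, (w x * binEntropy (z x) - w x * binEntropy (p x)
        + (w x * (z x * Real.log (z x) + (1 - z x) * Real.log (1 - z x))
           - w x * (p x * Real.log (z x) + (1 - p x) * Real.log (1 - z x)))) := by
        exact Finset.sum_congr rfl fun x _ => expand x
    _ = (1 - ∑ x, w x * binEntropy (p x)) - (1 - ∑ x, w x * binEntropy (z x)) := by
        rw [Finset.sum_add_distrib, Finset.sum_sub_distrib, Finset.sum_sub_distrib, key]
        ring
end

section
/- Fixed-selection-rate optimality of Bayes-based thresholds: let f select the top-β fraction of a finite population ranked by a refinement z' of z, and g select the top-β fraction ranked by z, both with ties broken to achieve exact selection rate β. Then the positive predictive value under z' is at least that under z: E[p*(x) | f selects x] ≥ E[p*(x) | g selects x], where expectations are over the population distribution, whenever z' refines z and both are calibrated. -/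
open scoped Classical BigOperators
open Finset

private lemma fiber_transfer {S : Type*} [Fintype S] (w p z : S → ℝ)
    (hcal : ∀ v : ℝ,
      ∑ x ∈ Finset.univ.filter (fun x => z x = v), w x * p x
        = v * ∑ x ∈ Finset.univ.filter (fun x => z x = v), w x)
    (G : ℝ → ℝ) :
    ∑ x, w x * G (z x) * p x = ∑ x, w x * G (z x) * z x := by
  classical
  rw [← Finset.sum_fiberwise_of_maps_to (g := z) (t := Finset.univ.image z)
        (fun x _ => Finset.mem_image_of_mem z (Finset.mem_univ x))
        (fun x => w x * G (z x) * p x),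
      ← Finset.sum_fiberwise_of_maps_to (g := z) (t := Finset.univ.image z)
        (fun x _ => Finset.mem_image_of_mem z (Finset.mem_univ x))
        (fun x => w x * G (z x) * z x)]
  refine Finset.sum_congr rfl fun v _ => ?_
  have h1 : ∑ x ∈ Finset.univ.filter (fun x => z x = v), w x * G (z x) * p x
      = G v * ∑ x ∈ Finset.univ.filter (fun x => z x = v), w x * p x := by
    rw [Finset.mul_sum]
    refine Finset.sum_congr rfl fun x hx => ?_
    simp only [Finset.mem_filter] at hx
    rw [hx.2]; ring
  have h2 : ∑ x ∈ Finset.univ.filter (fun x => z x = v), w x * G (z x) * z x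
      = G v * (v * ∑ x ∈ Finset.univ.filter (fun x => z x = v), w x) := by
    rw [Finset.mul_sum, Finset.mul_sum]
    refine Finset.sum_congr rfl fun x hx => ?_
    simp only [Finset.mem_filter] at hx
    rw [hx.2]; ring
  rw [h1, h2, hcal v]


/-- Fixed-selection-rate optimality of thresholds on refined
scores: let `z` be calibrated, `z'` a calibrated refinement of `z`, and let
`f` and `g` be (randomized) threshold selection rules on the scores `z'` and
`z`, respectively, both with selection rate `β > 0`.  Then the positive
predictive value under `f` is at least that under `g`:
`E[p*(x) | f selects x] ≥ E[p*(x) | g selects x]`. -/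
theorem ppv_improves_under_refinement
    {S : Type*} [Fintype S] [Nonempty S]
    (w : S → ℝ) (hw : ∀ x, 0 ≤ w x) (hwsum : ∑ x, w x = 1)
    (p z z' : S → ℝ)
    (hp : ∀ x, p x ∈ Set.Icc (0 : ℝ) 1)
    (hz : ∀ x, z x ∈ Set.Icc (0 : ℝ) 1) (hz' : ∀ x, z' x ∈ Set.Icc (0 : ℝ) 1)
    -- z is calibrated on S w.r.t. p*:
    (hcalz : ∀ v : ℝ,
      ∑ x ∈ Finset.univ.filter (fun x => z x = v), w x * p x
        = v * ∑ x ∈ Finset.univ.filter (fun x => z x = v), w x)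
    -- z' is calibrated on S w.r.t. p*:
    (hcalz' : ∀ u : ℝ,
      ∑ x ∈ Finset.univ.filter (fun x => z' x = u), w x * p x
        = u * ∑ x ∈ Finset.univ.filter (fun x => z' x = u), w x)
    -- z' refines z:
    (href : ∀ v : ℝ,
      ∑ x ∈ Finset.univ.filter (fun x => z x = v), w x * z' x
        = v * ∑ x ∈ Finset.univ.filter (fun x => z x = v), w x)
    (f g : S → ℝ)
    (hf01 : ∀ x, f x ∈ Set.Icc (0 : ℝ) 1) (hg01 : ∀ x, g x ∈ Set.Icc (0 : ℝ) 1)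
    -- f is a threshold policy on z' (randomizing only on the threshold):
    (hfthr : ∃ τ pτ : ℝ, ∀ x,
      (τ < z' x → f x = 1) ∧ (z' x < τ → f x = 0) ∧ (z' x = τ → f x = pτ))
    -- g is a threshold policy on z (randomizing only on the threshold):
    (hgthr : ∃ σ pσ : ℝ, ∀ x,
      (σ < z x → g x = 1) ∧ (z x < σ → g x = 0) ∧ (z x = σ → g x = pσ))
    (β : ℝ) (hβ : 0 < β)
    -- both policies have selection rate β:
    (hfrate : ∑ x, w x * f x = β) (hgrate : ∑ x, w x * g x = β) :
    (∑ x, w x * g x * p x) / β ≤ (∑ x, w x * f x * p x) / β := by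
    classical
  obtain ⟨τ, pτ, hf⟩ := hfthr
  obtain ⟨σ, pσ, hg⟩ := hgthr
  -- f and g as functions of scores
  set F : ℝ → ℝ := fun u => if τ < u then 1 else if u < τ then 0 else pτ with hF
  set G : ℝ → ℝ := fun v => if σ < v then 1 else if v < σ then 0 else pσ with hG
  have hfe : ∀ x, f x = F (z' x) := by
    intro x
    rcases lt_trichotomy (z' x) τ with h | h | h
    · simp [hF, (hf x).2.1 h, h, not_lt_of_gt h]
    · simp [hF, (hf x).2.2 h, h]
    · simp [hF, (hf x).1 h, h]
  have hge : ∀ x, g x = G (z x) := by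
    intro x
    rcases lt_trichotomy (z x) σ with h | h | h
    · simp [hG, (hg x).2.1 h, h, not_lt_of_gt h]
    · simp [hG, (hg x).2.2 h, h]
    · simp [hG, (hg x).1 h, h]
  -- step 1: ∑ w g p = ∑ w g z = ∑ w g z'
  have e1 : ∑ x, w x * g x * p x = ∑ x, w x * g x * z x := by
    simp only [hge]; exact fiber_transfer w p z hcalz G
  have e2 : ∑ x, w x * g x * z x = ∑ x, w x * g x * z' x := by
    simp only [hge]; exact (fiber_transfer w z' z href G).symm
  -- step 2: ∑ w f p = ∑ w f z'
  have e3 : ∑ x, w x * f x * p x = ∑ x, w x * f x * z' x := by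
    simp only [hfe]; exact fiber_transfer w p z' hcalz' F
  -- step 3: threshold optimality
  have key : 0 ≤ ∑ x, w x * (f x - g x) * (z' x - τ) := by
    apply Finset.sum_nonneg
    intro x _
    rcases lt_trichotomy (z' x) τ with h | h | h
    · have hf0 := (hf x).2.1 h
      have := (hg01 x).1
      have : w x * (f x - g x) ≤ 0 := by nlinarith [hw x]
      nlinarith
    · simp [h]
    · have hf1 := (hf x).1 h
      have := (hg01 x).2
      have : 0 ≤ w x * (f x - g x) := by nlinarith [hw x]
      nlinarith
  have expand : ∑ x, w x * (f x - g x) * (z' x - τ)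
      = ((∑ x, w x * f x * z' x) - τ * (∑ x, w x * f x))
        - ((∑ x, w x * g x * z' x) - τ * (∑ x, w x * g x)) := by
    simp only [Finset.mul_sum, ← Finset.sum_sub_distrib]
    refine Finset.sum_congr rfl fun x _ => ?_; ring
  rw [expand, hfrate, hgrate] at key
  have hle : ∑ x, w x * g x * z' x ≤ ∑ x, w x * f x * z' x := by linarith
  rw [e1, e2, e3]
  exact div_le_div_of_nonneg_right hle hβ.le
end
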